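/- Let (A_n) be a sequence of independent events in a probability space and (E_n) a sequence of events with P(E_n) → 0 as n → ∞. Suppose there is a constant C > 0 such that P(E_n ∩ A_n) ≤ C · P(A_n) · P(E_n) for all n. If ∑_n P(A_n) = ∞, then the events B_n = A_n \ E_n occur infinitely often almost surely, i.e., P(limsup_n B_n) = 1. -/

import Mathlib

open MeasureTheory ProbabilityTheory Filter
open scoped ENNReal

/-!
On a block of indices along which `∑ P (A n)` lies between `k` and `k + 1`, independence gives
`P (no A n in the block) ≤ ∏ (1 - P (A n)) ≤ 1 / (1 + k)`, while the event that every `A n` of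
the block that occurs is contaminated by `E n` costs at most
`∑ P (E n ∩ A n) ≤ sup (C * P (E n)) * (k + 1)`. Since `P (E n) → 0`, such blocks can be taken so
far out that the second term is at most `1 / (k + 1)`; so no tail of `B n` is avoided with
positive probability.
-/

theorem Finset.one_add_sum_le_prod_one_add {ι R : Type*} [CommSemiring R] [PartialOrder R]
    [IsOrderedRing R] (s : Finset ι) {f : ι → R} (hf : ∀ i ∈ s, 0 ≤ f i) :
    1 + ∑ i ∈ s, f i ≤ ∏ i ∈ s, (1 + f i) := by
  classical
  induction s using Finset.induction_on with
  | empty => simp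
  | insert a s ha ih =>
    rw [Finset.sum_insert ha, Finset.prod_insert ha]
    have hfa : 0 ≤ f a := hf a (Finset.mem_insert_self a s)
    have hs := ih fun i hi => hf i (Finset.mem_insert_of_mem hi)
    have hsum : 0 ≤ ∑ i ∈ s, f i := Finset.sum_nonneg fun i hi => hf i (Finset.mem_insert_of_mem hi)
    calc 1 + (f a + ∑ i ∈ s, f i) = (1 + ∑ i ∈ s, f i) + f a * 1 := by ring
      _ ≤ (1 + ∑ i ∈ s, f i) + f a * (1 + ∑ i ∈ s, f i) := by
        gcongr
        exact le_add_of_nonneg_right hsum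
      _ ≤ (∏ i ∈ s, (1 + f i)) + f a * ∏ i ∈ s, (1 + f i) := by gcongr
      _ = (1 + f a) * ∏ i ∈ s, (1 + f i) := by ring

namespace ENNReal

theorem one_sub_mul_one_add_le (p : ℝ≥0∞) : (1 - p) * (1 + p) ≤ 1 := by
  rcases le_total p 1 with hp | hp
  · calc (1 - p) * (1 + p) = (1 - p) + (1 - p) * p := by rw [mul_add, mul_one]
      _ ≤ (1 - p) + p := by gcongr; exact mul_le_of_le_one_left zero_le tsub_le_self
      _ = 1 := tsub_add_cancel_of_le hp
  · simp [tsub_eq_zero_of_le hp]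

theorem prod_one_sub_le_inv_one_add_sum {ι : Type*} (s : Finset ι) (f : ι → ℝ≥0∞) :
    ∏ i ∈ s, (1 - f i) ≤ (1 + ∑ i ∈ s, f i)⁻¹ := by
  rw [ENNReal.le_inv_iff_mul_le]
  calc (∏ i ∈ s, (1 - f i)) * (1 + ∑ i ∈ s, f i)
      ≤ (∏ i ∈ s, (1 - f i)) * ∏ i ∈ s, (1 + f i) := by
        gcongr
        exact s.one_add_sum_le_prod_one_add fun i _ => zero_le
    _ = ∏ i ∈ s, (1 - f i) * (1 + f i) := Finset.prod_mul_distrib.symm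
    _ ≤ 1 := Finset.prod_le_one' fun i _ => one_sub_mul_one_add_le (f i)

theorem tsum_nat_add_eq_top {f : ℕ → ℝ≥0∞} (hf : ∀ n, f n ≠ ∞) (hsum : ∑' n, f n = ∞) (k : ℕ) :
    ∑' n, f (n + k) = ∞ := by
  have hsplit := ENNReal.summable.sum_add_tsum_nat_add' (f := f) (k := k)
  rw [hsum, ENNReal.add_eq_top] at hsplit
  exact hsplit.resolve_left (ENNReal.sum_ne_top.2 fun i _ => hf i)

theorem exists_sum_range_mem_Icc {f : ℕ → ℝ≥0∞} (hf : ∀ n, f n ≤ 1) (hsum : ∑' n, f n = ∞)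
    {a : ℝ≥0∞} (ha : a ≠ ∞) : ∃ N, ∑ i ∈ Finset.range N, f i ∈ Set.Icc a (a + 1) := by
  classical
  have hex : ∃ N, a ≤ ∑ i ∈ Finset.range N, f i := by
    have htend := ENNReal.tendsto_nat_tsum f
    rw [hsum] at htend
    exact ((tendsto_order.1 htend).1 a ha.lt_top).exists.imp fun _ => le_of_lt
  refine ⟨Nat.find hex, Nat.find_spec hex, ?_⟩
  -- the first partial sum to reach `a` overshoots it by at most one term
  rcases hN : Nat.find hex with _ | N
  · simp
  · have hlt : ∑ i ∈ Finset.range N, f i < a := not_le.1 (Nat.find_min hex (by omega))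
    rw [Finset.sum_range_succ]
    exact add_le_add hlt.le (hf N)

end ENNReal

theorem measure_biInter_compl_diff_le_add {α ι : Type*} [MeasurableSpace α] (μ : Measure α)
    (A E : ι → Set α) (s : Finset ι) :
    μ (⋂ i ∈ s, (A i \ E i)ᶜ) ≤ μ (⋂ i ∈ s, (A i)ᶜ) + ∑ i ∈ s, μ (E i ∩ A i) := by
  have hsub : ⋂ i ∈ s, (A i \ E i)ᶜ ⊆ (⋂ i ∈ s, (A i)ᶜ) ∪ ⋃ i ∈ s, E i ∩ A i := by
    intro x hx
    simp only [Set.mem_iInter, Set.mem_compl_iff, Set.mem_sdiff, not_and, not_not] at hx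
    by_cases hA : ∃ i ∈ s, x ∈ A i
    · obtain ⟨i, hi, hxA⟩ := hA
      exact Or.inr (Set.mem_biUnion hi ⟨hx i hi hxA, hxA⟩)
    · push Not at hA
      exact Or.inl (Set.mem_iInter₂.2 hA)
  calc μ (⋂ i ∈ s, (A i \ E i)ᶜ) ≤ μ ((⋂ i ∈ s, (A i)ᶜ) ∪ ⋃ i ∈ s, E i ∩ A i) := measure_mono hsub
    _ ≤ μ (⋂ i ∈ s, (A i)ᶜ) + ∑ i ∈ s, μ (E i ∩ A i) :=
      (measure_union_le _ _).trans (add_le_add le_rfl (measure_biUnion_finset_le s _))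

theorem measure_limsup_eq_one_of_forall_measure_iInter_compl {α : Type*} [MeasurableSpace α]
    {μ : Measure α} [IsProbabilityMeasure μ] {s : ℕ → Set α}
    (h : ∀ m, μ (⋂ n ≥ m, (s n)ᶜ) = 0) : μ (limsup s atTop) = 1 := by
  rw [← measure_univ (μ := μ)]
  refine measure_congr (ae_eq_univ.2 ?_)
  simp only [limsup_eq_iInf_iSup_of_nat, Set.iInf_eq_iInter, Set.iSup_eq_iUnion, Set.compl_iInter,
    Set.compl_iUnion]
  exact measure_iUnion_null h

namespace ProbabilityTheory

variable {Ω ι : Type*} [MeasurableSpace Ω] {μ : Measure Ω}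

theorem iIndepSet.measure_biInter_compl_le {A : ι → Set Ω} (hA : ∀ i, MeasurableSet (A i))
    (hindep : iIndepSet A μ) (s : Finset ι) :
    μ (⋂ i ∈ s, (A i)ᶜ) ≤ (1 + ∑ i ∈ s, μ (A i))⁻¹ := by
  have := hindep.isProbabilityMeasure
  have hmeas (i : ι) : MeasurableSet[MeasurableSpace.comap (· ∈ A i) ⊤] (A i)ᶜ :=
    MeasurableSet.compl ⟨{True}, trivial, by ext; simp⟩
  rw [hindep.iIndep_comap_mem.meas_biInter fun i _ => hmeas i,
    Finset.prod_congr rfl fun i _ => prob_compl_eq_one_sub (hA i)]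
  exact ENNReal.prod_one_sub_le_inv_one_add_sum s _

theorem iIndepSet.measure_biInter_compl_diff_le {A E : ι → Set Ω}
    (hA : ∀ i, MeasurableSet (A i)) (hindep : iIndepSet A μ) {s : Finset ι} {δ : ℝ≥0∞}
    (hδ : ∀ i ∈ s, μ (E i ∩ A i) ≤ δ * μ (A i)) :
    μ (⋂ i ∈ s, (A i \ E i)ᶜ) ≤ (1 + ∑ i ∈ s, μ (A i))⁻¹ + δ * ∑ i ∈ s, μ (A i) := by
  calc μ (⋂ i ∈ s, (A i \ E i)ᶜ) ≤ μ (⋂ i ∈ s, (A i)ᶜ) + ∑ i ∈ s, μ (E i ∩ A i) :=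
        measure_biInter_compl_diff_le_add μ A E s
    _ ≤ (1 + ∑ i ∈ s, μ (A i))⁻¹ + δ * ∑ i ∈ s, μ (A i) := by
        rw [Finset.mul_sum]
        gcongr with i hi
        exacts [hindep.measure_biInter_compl_le hA s, hδ i hi]

theorem iIndepSet.measure_iInter_compl_diff_le {A E : ℕ → Set Ω}
    (hA : ∀ n, MeasurableSet (A n)) (hindep : iIndepSet A μ) (hsum : ∑' n, μ (A n) = ∞)
    {m k : ℕ} (hδ : ∀ n ≥ m, μ (E n ∩ A n) ≤ ((k + 1 : ℝ≥0∞)⁻¹) ^ 2 * μ (A n)) :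
    μ (⋂ n ≥ m, (A n \ E n)ᶜ) ≤ 2 * (k + 1 : ℝ≥0∞)⁻¹ := by
  have := hindep.isProbabilityMeasure
  have hshift : iIndepSet (A ∘ (· + m)) μ := hindep.precomp (add_left_injective m)
  have hsum_shift : ∑' i, μ (A (i + m)) = ∞ :=
    ENNReal.tsum_nat_add_eq_top (fun n => measure_ne_top μ (A n)) hsum m
  -- long enough for independence to make missing every `A n` unlikely, short enough that the
  -- contamination by the `E n` stays of order `(k + 1)⁻¹`
  obtain ⟨N, hNk, hNk1⟩ :=
    ENNReal.exists_sum_range_mem_Icc (fun i => prob_le_one) hsum_shift (ENNReal.natCast_ne_top k)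
  have hsub : ⋂ n ≥ m, (A n \ E n)ᶜ ⊆ ⋂ i ∈ Finset.range N, (A (i + m) \ E (i + m))ᶜ :=
    Set.subset_iInter₂ fun i _ => Set.biInter_subset_of_mem (Nat.le_add_left m i)
  have hk : (k + 1 : ℝ≥0∞) ≠ 0 := by positivity
  have hk' : (k + 1 : ℝ≥0∞) ≠ ∞ := by finiteness
  calc μ (⋂ n ≥ m, (A n \ E n)ᶜ)
      ≤ μ (⋂ i ∈ Finset.range N, (A (i + m) \ E (i + m))ᶜ) := measure_mono hsub
    _ ≤ (1 + ∑ i ∈ Finset.range N, μ (A (i + m)))⁻¹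
          + ((k + 1 : ℝ≥0∞)⁻¹) ^ 2 * ∑ i ∈ Finset.range N, μ (A (i + m)) :=
        hshift.measure_biInter_compl_diff_le (E := E ∘ (· + m)) (fun i => hA _)
          fun i _ => hδ _ (Nat.le_add_left m i)
    _ ≤ (k + 1 : ℝ≥0∞)⁻¹ + ((k + 1 : ℝ≥0∞)⁻¹) ^ 2 * (k + 1) := by
        refine add_le_add (ENNReal.inv_le_inv.2 ?_) (by gcongr)
        rw [add_comm]
        gcongr
    _ = 2 * (k + 1 : ℝ≥0∞)⁻¹ := by
        rw [pow_two, mul_assoc, ENNReal.inv_mul_cancel hk hk', mul_one, two_mul]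

theorem iIndepSet.measure_limsup_diff_eq_one {A E : ℕ → Set Ω}
    (hA : ∀ n, MeasurableSet (A n)) (hindep : iIndepSet A μ) (hsum : ∑' n, μ (A n) = ∞)
    {η : ℕ → ℝ≥0∞} (hη : Tendsto η atTop (nhds 0)) (hAE : ∀ n, μ (E n ∩ A n) ≤ η n * μ (A n)) :
    μ (limsup (fun n => A n \ E n) atTop) = 1 := by
  have := hindep.isProbabilityMeasure
  refine measure_limsup_eq_one_of_forall_measure_iInter_compl fun m => le_antisymm ?_ zero_le
  have htail (k : ℕ) : μ (⋂ n ≥ m, (A n \ E n)ᶜ) ≤ 2 * (k + 1 : ℝ≥0∞)⁻¹ := by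
    have hpos : 0 < ((k + 1 : ℝ≥0∞)⁻¹) ^ 2 := ENNReal.pow_pos (ENNReal.inv_pos.2 (by finiteness)) 2
    obtain ⟨m₀, hm₀⟩ := eventually_atTop.1 (hη.eventually (ge_mem_nhds hpos))
    calc μ (⋂ n ≥ m, (A n \ E n)ᶜ) ≤ μ (⋂ n ≥ max m m₀, (A n \ E n)ᶜ) :=
          measure_mono <| Set.subset_iInter₂ fun n hn =>
            Set.biInter_subset_of_mem (le_of_max_le_left hn)
      _ ≤ 2 * (k + 1 : ℝ≥0∞)⁻¹ := hindep.measure_iInter_compl_diff_le hA hsum fun n hn =>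
          (hAE n).trans (by gcongr; exact hm₀ n (le_of_max_le_right hn))
  have hlim : Tendsto (fun k : ℕ => 2 * (k + 1 : ℝ≥0∞)⁻¹) atTop (nhds 0) := by
    have := ENNReal.Tendsto.const_mul (a := 2)
      (ENNReal.tendsto_inv_nat_nhds_zero.comp (tendsto_add_atTop_nat 1)) (Or.inr (by simp))
    simpa using this
  exact ge_of_tendsto' hlim htail

end ProbabilityTheory

theorem contaminated_borel_cantelli_bigO_general
    {Ω : Type*} [MeasureSpace Ω]
    (A E : ℕ → Set Ω)
    (hA : ∀ n, MeasurableSet (A n))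
    (hAindep : iIndepSet A ℙ)
    (hE0 : Tendsto (fun n => ℙ (E n)) atTop (nhds 0))
    (C : ℝ≥0∞) (hCtop : C ≠ ∞)
    (hAE : ∀ n, ℙ (E n ∩ A n) ≤ C * ℙ (A n) * ℙ (E n))
    (hsum : ∑' n, ℙ (A n) = ∞)
    (B : ℕ → Set Ω) (hB : ∀ n, B n = A n \ E n) :
    ℙ (limsup B atTop) = 1 := by
  have hη : Tendsto (fun n => C * ℙ (E n)) atTop (nhds 0) := by
    simpa using ENNReal.Tendsto.const_mul hE0 (Or.inr hCtop)
  rw [funext hB]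
  exact hAindep.measure_limsup_diff_eq_one hA hsum hη fun n =>
    (hAE n).trans_eq (mul_right_comm _ _ _)

/-- **Contaminated second Borel–Cantelli, relaxed independence.** If the events
`A n` are independent, `P (E n) → 0`, there is a constant `C > 0` with
`P (E n ∩ A n) ≤ C * P (A n) * P (E n)` for all `n`, and `∑ P (A n) = ∞`, then
the events `B n = A n \ E n` occur infinitely often almost surely. -/
theorem contaminated_borel_cantelli_bigO
    {Ω : Type*} [MeasureSpace Ω] [IsProbabilityMeasure (ℙ : Measure Ω)]
    (A E : ℕ → Set Ω)
    (hA : ∀ n, MeasurableSet (A n)) (hE : ∀ n, MeasurableSet (E n))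
    (hAindep : iIndepSet A ℙ)
    (hE0 : Tendsto (fun n => ℙ (E n)) atTop (nhds 0))
    (C : ℝ≥0∞) (hCpos : 0 < C) (hCtop : C ≠ ∞)
    (hAE : ∀ n, ℙ (E n ∩ A n) ≤ C * ℙ (A n) * ℙ (E n))
    (hsum : ∑' n, ℙ (A n) = ∞)
    (B : ℕ → Set Ω) (hB : ∀ n, B n = A n \ E n) :
    ℙ (limsup B atTop) = 1 :=
  contaminated_borel_cantelli_bigO_general A E hA hAindep hE0 C hCtop hAE hsum B hB
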